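/- Let s ∈ (1/2, 1]. Then F_s is continuously differentiable on ℝ, and F_s' is bounded and uniformly continuous on ℝ. -/

import Mathlib

/-- The cutoff function `θ` of Definition 4.3: `θ(t) = (3/8)|t|^{1/2}(|t|² − (10/3)|t| + 5)`
for `|t| ≤ 1` and `θ(t) = 1` for `|t| > 1`. -/
noncomputable def theta (t : ℝ) : ℝ :=
  if |t| ≤ 1 then (3 / 8) * |t| ^ ((1 : ℝ) / 2) * (|t| ^ 2 - (10 / 3) * |t| + 5) else 1

/-- The auxiliary function `F_s(t) = θ(t)·|t|^s` of Definition 4.3. -/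
noncomputable def Fs (s t : ℝ) : ℝ := theta t * |t| ^ s

/-!
On `[-1, 1]` the cutoff turns `F_s` into `(3/8)|t|^(s+5/2) - (5/4)|t|^(s+3/2) + (15/8)|t|^(s+1/2)`,
a combination of powers `|t|^p` with `p > 1`, hence `C¹`; for `|t| ≥ 1` it is `|t|^s`, smooth away
from `0`. The coefficients of `θ` make the two pieces and their derivatives agree at `|t| = 1`
(value `1`, slope `s · sign t`), so the derivatives glue to a continuous `F_s'`. Since `s ≤ 1`,
`F_s'(t) = s · sign t · |t|^(s-1)` for `|t| ≥ 1` has limits at `±∞`, and a continuous function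
with limits at both ends is bounded and uniformly continuous.
-/

open Real Filter Topology Set

section Glue

variable {𝕜 F : Type*} [NontriviallyNormedField 𝕜] [NormedAddCommGroup F] [NormedSpace 𝕜 F]

theorem hasDerivAt_of_isClosed_cover {f g h f' : 𝕜 → F} {S T : Set 𝕜} (hS : IsClosed S)
    (hT : IsClosed T) (hST : S ∪ T = univ) (hfg : EqOn f g S) (hfh : EqOn f h T)
    (hg : ∀ x ∈ S, HasDerivAt g (f' x) x) (hh : ∀ x ∈ T, HasDerivAt h (f' x) x) (x : 𝕜) :
    HasDerivAt f (f' x) x := by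
  have hS' : HasDerivWithinAt f (f' x) S x := by
    by_cases hx : x ∈ S
    · exact (hg x hx).hasDerivWithinAt.congr hfg (hfg hx)
    · exact HasFDerivWithinAt.of_notMem_closure (by rwa [hS.closure_eq])
  have hT' : HasDerivWithinAt f (f' x) T x := by
    by_cases hx : x ∈ T
    · exact (hh x hx).hasDerivWithinAt.congr hfh (hfh hx)
    · exact HasFDerivWithinAt.of_notMem_closure (by rwa [hT.closure_eq])
  simpa [hST] using hS'.union hT'

end Glue

section LimitsAtInfinity

variable {E : Type*} [NormedAddCommGroup E] {f : ℝ → E} {a b : E}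

theorem Continuous.exists_forall_norm_le_of_tendsto_atTop_atBot (hf : Continuous f)
    (ha : Tendsto f atTop (𝓝 a)) (hb : Tendsto f atBot (𝓝 b)) : ∃ M, ∀ x, ‖f x‖ ≤ M := by
  obtain ⟨M, hM⟩ := isBounded_iff_forall_norm_le.1 <|
    hf.isBounded_range_iff_isBigO_atTop_atBot.2 ⟨ha.isBigO_one ℝ, hb.isBigO_one ℝ⟩
  exact ⟨M, fun x => hM _ ⟨x, rfl⟩⟩

-- `f` differs from a uniformly continuous ramp between `b` and `a` by a function vanishing at
-- infinity.
theorem Continuous.uniformContinuous_of_tendsto_atTop_atBot [NormedSpace ℝ E] (hf : Continuous f)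
    (ha : Tendsto f atTop (𝓝 a)) (hb : Tendsto f atBot (𝓝 b)) : UniformContinuous f := by
  set ramp : ℝ → E := fun x => max 0 (min 1 x) • (a - b) + b
  have hramp : UniformContinuous ramp :=
    ((ContinuousLinearMap.toSpanSingleton ℝ (a - b)).uniformContinuous.comp
      ((LipschitzWith.id.const_min 1).const_max 0).uniformContinuous).add_const b
  have ha' : Tendsto ramp atTop (𝓝 a) := by
    refine tendsto_const_nhds.congr' ?_
    filter_upwards [eventually_ge_atTop 1] with x hx
    simp [ramp, min_eq_left hx]
  have hb' : Tendsto ramp atBot (𝓝 b) := by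
    refine tendsto_const_nhds.congr' ?_
    filter_upwards [eventually_le_atBot 0] with x hx
    simp [ramp, min_eq_right (hx.trans zero_le_one), max_eq_left hx]
  have hdiff : Tendsto (f - ramp) (cocompact ℝ) (𝓝 0) := by
    rw [cocompact_eq_atBot_atTop, tendsto_sup]
    exact ⟨sub_self b ▸ hb.sub hb', sub_self a ▸ ha.sub ha'⟩
  simpa using ((hf.sub hramp.continuous).uniformContinuous_of_tendsto_cocompact hdiff).add hramp

end LimitsAtInfinity

theorem hasDerivAt_abs_rpow_of_ne_zero (p : ℝ) {x : ℝ} (hx : x ≠ 0) :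
    HasDerivAt (fun x : ℝ => |x| ^ p) (p * |x| ^ (p - 2) * x) x := by
  convert (hasDerivAt_abs hx).rpow_const (p := p) (Or.inl (abs_ne_zero.2 hx)) using 1
  rw [show p - 1 = p - 2 + 1 by ring, rpow_add_one (abs_ne_zero.2 hx)]
  linear_combination (-(p * |x| ^ (p - 2))) * sign_mul_abs x

theorem exists_tendsto_rpow_atTop {p : ℝ} (hp : p ≤ 0) :
    ∃ L, Tendsto (fun t : ℝ => t ^ p) atTop (𝓝 L) := by
  rcases hp.lt_or_eq with hp | rfl
  · exact ⟨0, by simpa using tendsto_rpow_neg_atTop (neg_pos.2 hp)⟩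
  · exact ⟨1, by simp⟩

noncomputable def fsInner (s t : ℝ) : ℝ :=
  3 / 8 * |t| ^ (s + 5 / 2) - 5 / 4 * |t| ^ (s + 3 / 2) + 15 / 8 * |t| ^ (s + 1 / 2)

noncomputable def fsInnerDeriv (s t : ℝ) : ℝ :=
  3 / 8 * (s + 5 / 2) * |t| ^ (s + 1 / 2) * t - 5 / 4 * (s + 3 / 2) * |t| ^ (s - 1 / 2) * t
    + 15 / 8 * (s + 1 / 2) * |t| ^ (s - 3 / 2) * t

noncomputable def fsDeriv (s t : ℝ) : ℝ :=
  if |t| ≤ 1 then fsInnerDeriv s t else s * |t| ^ (s - 2) * t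

theorem Fs_eq_fsInner {s t : ℝ} (hs : -1 / 2 < s) (ht : |t| ≤ 1) : Fs s t = fsInner s t := by
  have hr := abs_nonneg t
  have e₁ : |t| ^ (s + 5 / 2) = |t| ^ ((1 : ℝ) / 2) * |t| ^ 2 * |t| ^ s := by
    rw [show s + 5 / 2 = 1 / 2 + (2 : ℕ) + s by push_cast; ring, rpow_add' hr (by linarith),
      rpow_add' hr (by norm_num), rpow_natCast]
  have e₂ : |t| ^ (s + 3 / 2) = |t| ^ ((1 : ℝ) / 2) * |t| * |t| ^ s := by
    rw [show s + 3 / 2 = 1 / 2 + 1 + s by ring, rpow_add' hr (by linarith),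
      rpow_add' hr (by norm_num), rpow_one]
  have e₃ : |t| ^ (s + 1 / 2) = |t| ^ ((1 : ℝ) / 2) * |t| ^ s := by
    rw [add_comm, rpow_add' hr (by linarith)]
  rw [Fs, theta, if_pos ht, fsInner, e₁, e₂, e₃]
  ring

theorem Fs_eq_abs_rpow {s t : ℝ} (ht : 1 ≤ |t|) : Fs s t = |t| ^ s := by
  rcases ht.eq_or_lt with h | h
  · rw [Fs, theta, if_pos h.ge, ← h]
    norm_num
  · rw [Fs, theta, if_neg h.not_ge, one_mul]

theorem contDiff_fsInner {s : ℝ} (hs : 1 / 2 < s) : ContDiff ℝ 1 (fsInner s) := by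
  have h : ∀ p : ℝ, 1 < p → ContDiff ℝ 1 fun x : ℝ => |x| ^ p := fun p hp => by
    simpa using contDiff_norm_rpow (E := ℝ) hp
  exact ((contDiff_const.mul (h _ (by linarith))).sub (contDiff_const.mul (h _ (by linarith)))).add
    (contDiff_const.mul (h _ (by linarith)))

theorem hasDerivAt_fsInner {s : ℝ} (hs : 1 / 2 < s) (t : ℝ) :
    HasDerivAt (fsInner s) (fsInnerDeriv s t) t := by
  have h := (((hasDerivAt_abs_rpow t (p := s + 5 / 2) (by linarith)).const_mul (3 / 8)).sub
    ((hasDerivAt_abs_rpow t (p := s + 3 / 2) (by linarith)).const_mul (5 / 4))).add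
    ((hasDerivAt_abs_rpow t (p := s + 1 / 2) (by linarith)).const_mul (15 / 8))
  refine h.congr_deriv ?_
  rw [fsInnerDeriv, show s + 5 / 2 - 2 = s + 1 / 2 by ring, show s + 3 / 2 - 2 = s - 1 / 2 by ring,
    show s + 1 / 2 - 2 = s - 3 / 2 by ring]
  ring

theorem continuous_fsInnerDeriv {s : ℝ} (hs : 1 / 2 < s) : Continuous (fsInnerDeriv s) := by
  rw [← funext fun t => (hasDerivAt_fsInner hs t).deriv]
  exact (contDiff_fsInner hs).continuous_deriv le_rfl

theorem fsDeriv_of_one_le_abs {s t : ℝ} (ht : 1 ≤ |t|) : fsDeriv s t = s * |t| ^ (s - 2) * t := by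
  rcases ht.eq_or_lt with h | h
  · rw [fsDeriv, if_pos h.ge, fsInnerDeriv, ← h]
    simp only [one_rpow]
    ring
  · rw [fsDeriv, if_neg h.not_ge]

theorem hasDerivAt_Fs {s : ℝ} (hs : 1 / 2 < s) (t : ℝ) : HasDerivAt (Fs s) (fsDeriv s t) t := by
  refine hasDerivAt_of_isClosed_cover (S := {x | |x| ≤ 1}) (T := {x | 1 ≤ |x|})
    (g := fsInner s) (h := fun x => |x| ^ s)
    (isClosed_le continuous_abs continuous_const) (isClosed_le continuous_const continuous_abs) ?_
    (fun x hx => Fs_eq_fsInner (by linarith) hx) (fun x hx => Fs_eq_abs_rpow hx)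
    (fun x (hx : |x| ≤ 1) => ?_) (fun x (hx : 1 ≤ |x|) => ?_) t
  · ext x
    simp [le_total]
  · rw [fsDeriv, if_pos hx]
    exact hasDerivAt_fsInner hs x
  · rw [fsDeriv_of_one_le_abs hx]
    exact hasDerivAt_abs_rpow_of_ne_zero s (by rintro rfl; norm_num at hx)

theorem continuous_fsDeriv {s : ℝ} (hs : 1 / 2 < s) : Continuous (fsDeriv s) := by
  refine continuous_if_le continuous_abs continuous_const (continuous_fsInnerDeriv hs).continuousOn
    ?_ fun t ht => by rw [← fsDeriv_of_one_le_abs ht.ge, fsDeriv, if_pos ht.le]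
  exact (continuousOn_const.mul (continuous_abs.continuousOn.rpow_const
    fun t (ht : 1 ≤ |t|) => Or.inl (one_pos.trans_le ht).ne')).mul continuousOn_id

theorem fsDeriv_neg (s t : ℝ) : fsDeriv s (-t) = -fsDeriv s t := by
  simp only [fsDeriv, fsInnerDeriv, abs_neg]
  split_ifs <;> ring

theorem tendsto_fsDeriv_atTop_atBot {s : ℝ} (hs : s ≤ 1) :
    ∃ L, Tendsto (fsDeriv s) atTop (𝓝 L) ∧ Tendsto (fsDeriv s) atBot (𝓝 (-L)) := by
  obtain ⟨L, hL⟩ := exists_tendsto_rpow_atTop (show s - 1 ≤ 0 by linarith)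
  have hTop : Tendsto (fsDeriv s) atTop (𝓝 (s * L)) := by
    refine (hL.const_mul s).congr' ?_
    filter_upwards [eventually_ge_atTop 1] with t ht
    rw [fsDeriv_of_one_le_abs (ht.trans (le_abs_self t)), abs_of_pos (by linarith), mul_assoc,
      ← rpow_add_one (by positivity), show s - 2 + 1 = s - 1 by ring]
  refine ⟨s * L, hTop, ?_⟩
  simpa [Function.comp_def, fsDeriv_neg] using (hTop.comp tendsto_neg_atBot_atTop).neg

/-- For `s ∈ (1/2, 1]`, `F_s` is continuously differentiable on `ℝ`, and `F_s'` is
bounded and uniformly continuous on `ℝ`. -/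
theorem stmt_12 (s : ℝ) (hs1 : 1 / 2 < s) (hs2 : s ≤ 1) :
    ContDiff ℝ 1 (Fs s) ∧
    (∃ M : ℝ, ∀ t : ℝ, |deriv (Fs s) t| ≤ M) ∧
    UniformContinuous (deriv (Fs s)) := by
  have hderiv : deriv (Fs s) = fsDeriv s := funext fun t => (hasDerivAt_Fs hs1 t).deriv
  have hcont := continuous_fsDeriv hs1
  obtain ⟨L, hTop, hBot⟩ := tendsto_fsDeriv_atTop_atBot hs2
  refine ⟨contDiff_one_iff_deriv.2 ⟨fun t => (hasDerivAt_Fs hs1 t).differentiableAt, hderiv ▸ hcont⟩,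
    hderiv ▸ hcont.exists_forall_norm_le_of_tendsto_atTop_atBot hTop hBot,
    hderiv ▸ hcont.uniformContinuous_of_tendsto_atTop_atBot hTop hBot⟩
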